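/- Let W be a symmetric brace algebra over k, let W′ be a ℤ-graded k-vector space, and let A : W′ → W and C : W → W′ be degree-0 linear maps with C∘A = id_{W′} such that for all homogeneous θ, φ ∈ W one has (A(C(θ)))⟨φ⟩ = 0 and C(θ⟨A(C(φ))⟩) = C(θ⟨φ⟩). Then for every n ≥ 1 and all homogeneous θ, φ_1, …, φ_n ∈ W one has (A(C(θ)))⟨φ_1,…,φ_n⟩ = 0 and C(θ⟨A(C(φ_1)),…,A(C(φ_n))⟩) = C(θ⟨φ_1,…,φ_n⟩). -/
import Mathlib


/-!
Statement 3: for a symmetric brace algebra `W`, a graded space `W'` and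
degree-0 maps `A : W' → W`, `C : W → W'` with `C ∘ A = id` such that
`(AC θ)⟨φ⟩ = 0` and `C(θ⟨AC φ⟩) = C(θ⟨φ⟩)` on homogeneous elements, one has
`(AC θ)⟨φ_1,…,φ_n⟩ = 0` and `C(θ⟨AC φ_1,…,AC φ_n⟩) = C(θ⟨φ_1,…,φ_n⟩)` for
all `n ≥ 1` and homogeneous `θ, φ_1, …, φ_n`.
-/

open scoped BigOperators

/-- The Koszul sign of a permutation `σ` acting on graded elements whose
degrees are recorded by `d` (the sign picked up when rearranging
`(y 0, …, y (n-1))` into `(y (σ 0), …, y (σ (n-1)))`). -/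
def koszulSign {n : ℕ} (d : Fin n → ℤ) (σ : Equiv.Perm (Fin n)) : ℤˣ :=
  ∏ p ∈ Finset.univ.filter
      (fun p : Fin n × Fin n => p.1 < p.2 ∧ σ p.2 < σ p.1),
    (-1 : ℤˣ) ^ (d (σ p.1) * d (σ p.2))

/-- An "unshuffle decomposition" of `{1,…,n}` into `m + 1` blocks is encoded
by the function `g : Fin n → Fin (m+1)` assigning to each index its block;
the elements of each block are taken in increasing order.  `blockCard g j`
is the size `t_j` of the `j`-th block. -/
def blockCard {n m : ℕ} (g : Fin n → Fin (m + 1)) (j : Fin (m + 1)) : ℕ :=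
  (Finset.univ.filter fun b => g b = j).card

/-- The increasing enumeration `i^j_1 < ⋯ < i^j_{t_j}` of the `j`-th block. -/
def blockEmb {n m : ℕ} (g : Fin n → Fin (m + 1)) (j : Fin (m + 1))
    (a : Fin (blockCard g j)) : Fin n :=
  ((Finset.univ.filter fun b => g b = j).orderIsoOfFin rfl a : Fin n)

/-- The permutation of `{1,…,n}` corresponding to the unshuffle decomposition
`g`: it lists the elements of block `0`, then of block `1`, …, each block in
increasing order (obtained by sorting indices by block lexicographically). -/
def sortPerm {n m : ℕ} (g : Fin n → Fin (m + 1)) : Equiv.Perm (Fin n) :=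
  Tuple.sort (fun b => (toLex (g b, b) : Lex (Fin (m + 1) × Fin n)))

/-- A symmetric brace algebra over `k`: a ℤ-graded vector space `W` with
multilinear degree-0 graded-symmetric braces `x⟨x_1,…,x_n⟩` such that
`x⟨⟩ = x` and the brace axiom holds. -/
structure SymmBraceAlg (k : Type*) (W : Type*) [Field k] [AddCommGroup W]
    [Module k W] where
  grading : ℤ → Submodule k W
  internal : DirectSum.IsInternal grading
  brace : ∀ n : ℕ, W → (Fin n → W) → W
  /-- multilinearity in the first argument -/
  brace_add_left : ∀ (n : ℕ) (x x' : W) (y : Fin n → W),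
    brace n (x + x') y = brace n x y + brace n x' y
  brace_smul_left : ∀ (n : ℕ) (c : k) (x : W) (y : Fin n → W),
    brace n (c • x) y = c • brace n x y
  /-- multilinearity in each of the remaining arguments -/
  brace_add_slot : ∀ (n : ℕ) (x : W) (y : Fin n → W) (i : Fin n) (u v : W),
    brace n x (Function.update y i (u + v)) =
      brace n x (Function.update y i u) + brace n x (Function.update y i v)
  brace_smul_slot : ∀ (n : ℕ) (x : W) (y : Fin n → W) (i : Fin n) (c : k) (u : W),
    brace n x (Function.update y i (c • u)) =
      c • brace n x (Function.update y i u)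
  /-- the braces have degree 0 -/
  brace_degree : ∀ (n : ℕ) (dx : ℤ) (dy : Fin n → ℤ) (x : W) (y : Fin n → W),
    x ∈ grading dx → (∀ i, y i ∈ grading (dy i)) →
    brace n x y ∈ grading (dx + ∑ i, dy i)
  /-- graded symmetry in `x_1, …, x_n` -/
  brace_symm : ∀ (n : ℕ) (dy : Fin n → ℤ) (x : W) (y : Fin n → W),
    (∀ i, y i ∈ grading (dy i)) → ∀ σ : Equiv.Perm (Fin n),
      brace n x (fun i => y (σ i)) = (koszulSign dy σ : ℤ) • brace n x y
  /-- `x⟨⟩ = x` -/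
  brace_empty : ∀ (x : W) (y : Fin 0 → W), brace 0 x y = x
  /-- the brace axiom: `x⟨x_1,…,x_m⟩⟨y_1,…,y_n⟩` is the sum, over all
  unshuffle decompositions of `{1,…,n}` into `m + 1` blocks, of
  `ε • x⟨x_1⟨block 1⟩,…,x_m⟨block m⟩, block (m+1)⟩`, `ε` being the Koszul
  sign of the corresponding permutation of the graded elements `y`. -/
  brace_axiom : ∀ (m n : ℕ) (dy : Fin n → ℤ) (x : W) (xs : Fin m → W)
    (y : Fin n → W), (∀ i, y i ∈ grading (dy i)) →
    brace n (brace m x xs) y =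
      ∑ g : Fin n → Fin (m + 1),
        (koszulSign dy (sortPerm g) : ℤ) •
          brace (m + blockCard g (Fin.last m)) x
            (Fin.append
              (fun i : Fin m =>
                brace (blockCard g i.castSucc) (xs i)
                  (fun a => y (blockEmb g i.castSucc a)))
              (fun a => y (blockEmb g (Fin.last m) a)))

section Aux
variable {k W : Type} [Field k] [AddCommGroup W] [Module k W] (B : SymmBraceAlg k W)

lemma matrix_fin1 (u : W) (j : Fin 1) : ![u] j = u := by
  fin_cases j; rfl

lemma update_fin1 (u v : W) : Function.update ![u] (0 : Fin 1) v = ![v] := by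
  funext i; fin_cases i; simp

lemma brace_zero_left (n : ℕ) (y : Fin n → W) : B.brace n 0 y = 0 := by
  have h := B.brace_smul_left n (0 : k) 0 y
  simpa using h

lemma brace1_smul (θ : W) (c : k) (u : W) :
    B.brace 1 θ ![c • u] = c • B.brace 1 θ ![u] := by
  have h := B.brace_smul_slot 1 θ ![u] 0 c u
  rwa [update_fin1 u (c • u), update_fin1 u u] at h

lemma koszulSign_fin1 (d : Fin 1 → ℤ) (σ : Equiv.Perm (Fin 1)) : koszulSign d σ = 1 := by
  unfold koszulSign
  rw [Finset.filter_false_of_mem, Finset.prod_empty]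
  rintro p _ ⟨h, -⟩
  exact absurd h (Subsingleton.elim p.1 p.2 ▸ lt_irrefl _)

lemma brace_congr {n n' : ℕ} (h : n = n') (x : W) (y : Fin n → W) (y' : Fin n' → W)
    (hy : ∀ (i : Fin n) (i' : Fin n'), (i : ℕ) = (i' : ℕ) → y i = y' i') :
    B.brace n x y = B.brace n' x y' := by
  subst h
  exact congrArg _ (funext fun i => hy i i rfl)

lemma blockCard_const (m : ℕ) (j₀ j : Fin (m + 1)) :
    blockCard (fun _ : Fin 1 => j₀) j = if j₀ = j then 1 else 0 := by
  unfold blockCard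
  simp [Finset.filter_const, apply_ite Finset.card]

lemma helperA (m : ℕ) (c : Fin (m + 1) → ℕ) (x χ : W) (xs : Fin m → W)
    (hl : c (Fin.last m) = 1) (hc : ∀ i : Fin m, c i.castSucc = 0) :
    B.brace (m + c (Fin.last m)) x
      (Fin.append (fun i => B.brace (c i.castSucc) (xs i) (fun _ => χ))
        (fun _ : Fin (c (Fin.last m)) => χ)) =
    B.brace (m + 1) x (Fin.snoc xs χ) := by
  apply brace_congr B (by omega)
  intro a a' haa'
  cases a using Fin.addCases with
  | left i =>
    rw [Fin.append_left]
    have ha' : a' = Fin.castSucc i := by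
      apply Fin.ext; simpa using haa'.symm
    rw [ha', Fin.snoc_castSucc]
    rw [brace_congr B (hc i) (xs i) _ (fun _ : Fin 0 => χ) (fun _ _ _ => rfl), B.brace_empty]
  | right i =>
    rw [Fin.append_right]
    have ha' : a' = Fin.last m := by
      apply Fin.ext
      have h2 : (i : ℕ) < c (Fin.last m) := i.2
      simp only [Fin.coe_natAdd] at haa'
      simp only [Fin.val_last]
      omega
    rw [ha', Fin.snoc_last]

lemma helperB (m : ℕ) (c : Fin (m + 1) → ℕ) (i₀ : Fin m) (x χ : W) (xs : Fin m → W)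
    (hl : c (Fin.last m) = 0) (hc : ∀ i : Fin m, c i.castSucc = if i = i₀ then 1 else 0) :
    B.brace (m + c (Fin.last m)) x
      (Fin.append (fun i => B.brace (c i.castSucc) (xs i) (fun _ => χ))
        (fun _ : Fin (c (Fin.last m)) => χ)) =
    B.brace m x (Function.update xs i₀ (B.brace 1 (xs i₀) ![χ])) := by
  apply brace_congr B (by omega)
  intro a a' haa'
  cases a using Fin.addCases with
  | left i =>
    rw [Fin.append_left]
    have ha' : a' = i := by apply Fin.ext; simpa using haa'.symm
    rw [ha']
    by_cases hi : i = i₀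
    · subst hi
      rw [Function.update_self]
      apply brace_congr B (by rw [hc]; simp)
      intro b b' _
      rw [matrix_fin1]
    · rw [Function.update_of_ne hi]
      rw [brace_congr B (by rw [hc, if_neg hi]) (xs i) _ (fun _ : Fin 0 => χ) (fun _ _ _ => rfl),
        B.brace_empty]
  | right i =>
    exact absurd i.2 (by omega)

lemma brace_one (m : ℕ) (x χ : W) (xs : Fin m → W) (dχ : ℤ) (hχ : χ ∈ B.grading dχ) :
    B.brace 1 (B.brace m x xs) ![χ] =
      B.brace (m + 1) x (Fin.snoc xs χ) +
        ∑ i : Fin m, B.brace m x (Function.update xs i (B.brace 1 (xs i) ![χ])) := by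
  rw [B.brace_axiom m 1 (fun _ => dχ) x xs ![χ]
    (fun i => by rw [matrix_fin1]; exact hχ)]
  rw [← Equiv.sum_comp ((Equiv.funUnique (Fin 1) (Fin (m + 1))).symm)]
  simp only [koszulSign_fin1, Units.val_one, one_smul, matrix_fin1]
  rw [Fin.sum_univ_castSucc, add_comm]
  congr 1
  · exact helperA B m (blockCard (fun _ : Fin 1 => Fin.last m)) x χ xs
      (by rw [blockCard_const]; simp)
      (fun i => by rw [blockCard_const, if_neg (Fin.castSucc_lt_last i).ne'])
  · apply Finset.sum_congr rfl
    intro i _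
    exact helperB B m (blockCard (fun _ : Fin 1 => i.castSucc)) i x χ xs
      (by rw [blockCard_const, if_neg (Fin.castSucc_lt_last i).ne])
      (fun i' => by rw [blockCard_const]; simp [Fin.castSucc_inj, eq_comm])

lemma updMem {n : ℕ} (ys : Fin n → W) (dys : Fin n → ℤ) (i₀ : Fin n) (v : W) (dv : ℤ)
    (hys : ∀ i, ys i ∈ B.grading (dys i)) (hv : v ∈ B.grading dv) :
    ∀ i, Function.update ys i₀ v i ∈ B.grading (Function.update dys i₀ dv i) := by
  intro i
  rcases eq_or_ne i i₀ with rfl | hne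
  · simpa using hv
  · simpa [Function.update_of_ne hne] using hys i

lemma snoc_self {n : ℕ} (q : Fin (n + 1) → W) :
    Fin.snoc (fun i : Fin n => q i.castSucc) (q (Fin.last n)) = q := by
  funext i
  induction i using Fin.lastCases with
  | last => rw [Fin.snoc_last]
  | cast j => rw [Fin.snoc_castSucc]

end Aux
theorem statement3
    {k W W' : Type} [Field k] [AddCommGroup W] [Module k W]
    [AddCommGroup W'] [Module k W']
    (B : SymmBraceAlg k W)
    -- `W'` is a graded vector space:
    (grading' : ℤ → Submodule k W') (internal' : DirectSum.IsInternal grading')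
    -- `A` and `C` are degree-0 linear maps with `C ∘ A = id`:
    (A : W' →ₗ[k] W) (C : W →ₗ[k] W')
    (hA : ∀ (d : ℤ) (x : W'), x ∈ grading' d → A x ∈ B.grading d)
    (hC : ∀ (d : ℤ) (x : W), x ∈ B.grading d → C x ∈ grading' d)
    (hCA : ∀ x : W', C (A x) = x)
    -- the two hypotheses on unary braces, for homogeneous `θ, φ`:
    (h1 : ∀ (dθ dφ : ℤ) (θ φ : W), θ ∈ B.grading dθ → φ ∈ B.grading dφ →
      B.brace 1 (A (C θ)) ![φ] = 0)
    (h2 : ∀ (dθ dφ : ℤ) (θ φ : W), θ ∈ B.grading dθ → φ ∈ B.grading dφ →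
      C (B.brace 1 θ ![A (C φ)]) = C (B.brace 1 θ ![φ])) :
    -- conclusion, for every `n ≥ 1` and homogeneous `θ, φ_1, …, φ_n`:
    ∀ (n : ℕ), 1 ≤ n → ∀ (dθ : ℤ) (dφ : Fin n → ℤ) (θ : W) (φ : Fin n → W),
      θ ∈ B.grading dθ → (∀ i, φ i ∈ B.grading (dφ i)) →
      B.brace n (A (C θ)) φ = 0 ∧
      C (B.brace n θ (fun i => A (C (φ i)))) = C (B.brace n θ φ) := by
  -- `A ∘ C` preserves degrees
  have hACmem : ∀ (d : ℤ) (ψ : W), ψ ∈ B.grading d → A (C ψ) ∈ B.grading d :=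
    fun d ψ h => hA d _ (hC d _ h)
  -- the unary hypothesis `h2` in "kernel" form
  have h2' : ∀ (dθ dδ : ℤ) (θ δ : W), θ ∈ B.grading dθ → δ ∈ B.grading dδ →
      C δ = 0 → C (B.brace 1 θ ![δ]) = 0 := by
    intro dθ dδ θ δ hθ hδ hCδ
    have h := h2 dθ dδ θ (-δ) hθ (neg_mem hδ)
    have hz : A (C (-δ)) = 0 := by rw [map_neg, hCδ, neg_zero, map_zero]
    rw [hz] at h
    have e0 : B.brace 1 θ ![(0 : W)] = 0 := by
      have := brace1_smul B θ (0 : k) 0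
      simpa using this
    have en : B.brace 1 θ ![-δ] = -B.brace 1 θ ![δ] := by
      have := brace1_smul B θ (-1 : k) δ
      simpa using this
    rw [e0, en, map_zero, map_neg] at h
    exact neg_eq_zero.mp h.symm
  -- killing a brace with one slot in the kernel of `C`
  have slotKill : ∀ (m : ℕ) (dθ : ℤ) (dψ : Fin (m + 1) → ℤ) (θ : W)
      (ψ : Fin (m + 1) → W) (j : Fin (m + 1)),
      θ ∈ B.grading dθ → (∀ i, ψ i ∈ B.grading (dψ i)) → C (ψ j) = 0 →
      C (B.brace (m + 1) θ ψ) = 0 := by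
    intro m
    induction m with
    | zero =>
      intro dθ dψ θ ψ j hθ hψ hj
      have hψe : ψ = ![ψ 0] := by
        funext i
        fin_cases i
        rfl
      rw [hψe]
      exact h2' dθ (dψ 0) θ (ψ 0) hθ (hψ 0)
        (by rw [Subsingleton.elim (0 : Fin 1) j]; exact hj)
    | succ m IH =>
      intro dθ dψ θ ψ j hθ hψ hj
      set σ := Equiv.swap j (Fin.last (m + 1)) with hσdef
      have hsym := B.brace_symm (m + 2) dψ θ ψ hψ σ
      set s := koszulSign dψ σ with hsdef
      -- it suffices to kill the permuted brace
      have hmain : C (B.brace (m + 2) θ (fun i => ψ (σ i))) = 0 := by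
        set ψ' := fun i => ψ (σ i) with hψ'def
        have hψ'h : ∀ i, ψ' i ∈ B.grading (dψ (σ i)) := fun i => hψ (σ i)
        have hC' : C (ψ' (Fin.last (m + 1))) = 0 := by
          have : σ (Fin.last (m + 1)) = j := Equiv.swap_apply_right _ _
          simp only [hψ'def, this]
          exact hj
        set xs := fun i : Fin (m + 1) => ψ' i.castSucc with hxsdef
        set χ := ψ' (Fin.last (m + 1)) with hχdef
        have hsnoc : Fin.snoc xs χ = ψ' := snoc_self ψ'
        set dxs := fun i : Fin (m + 1) => dψ (σ i.castSucc) with hdxsdef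
        have hxs : ∀ i, xs i ∈ B.grading (dxs i) := fun i => hψ'h i.castSucc
        have hχmem : χ ∈ B.grading (dψ (σ (Fin.last (m + 1)))) := hψ'h _
        have hb1 := brace_one B (m + 1) θ χ xs (dψ (σ (Fin.last (m + 1)))) hχmem
        have hS : B.brace (m + 2) θ (Fin.snoc xs χ) =
            B.brace 1 (B.brace (m + 1) θ xs) ![χ] -
              ∑ i : Fin (m + 1),
                B.brace (m + 1) θ (Function.update xs i (B.brace 1 (xs i) ![χ])) := by
          rw [hb1]; abel
        rw [← hsnoc, hS, map_sub, map_sum]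
        have hL : C (B.brace 1 (B.brace (m + 1) θ xs) ![χ]) = 0 := by
          exact h2' (dθ + ∑ i, dxs i) (dψ (σ (Fin.last (m + 1)))) _ χ
            (B.brace_degree (m + 1) dθ dxs θ xs hθ hxs) hχmem hC'
        have hR : ∀ i : Fin (m + 1),
            C (B.brace (m + 1) θ (Function.update xs i (B.brace 1 (xs i) ![χ]))) = 0 := by
          intro i
          have hχi : B.brace 1 (xs i) ![χ] ∈
              B.grading (dxs i + ∑ _a : Fin 1, dψ (σ (Fin.last (m + 1)))) :=
            B.brace_degree 1 (dxs i) (fun _ => dψ (σ (Fin.last (m + 1)))) (xs i) ![χ]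
              (hxs i) (fun a => by rw [matrix_fin1]; exact hχmem)
          have hCχi : C (B.brace 1 (xs i) ![χ]) = 0 :=
            h2' (dxs i) (dψ (σ (Fin.last (m + 1)))) (xs i) χ (hxs i) hχmem hC'
          exact IH dθ
            (Function.update dxs i (dxs i + ∑ _a : Fin 1, dψ (σ (Fin.last (m + 1)))))
            θ (Function.update xs i (B.brace 1 (xs i) ![χ])) i hθ
            (updMem B xs dxs i _ _ hxs hχi)
            (by rw [Function.update_self]; exact hCχi)
        rw [hL, Finset.sum_eq_zero (fun i _ => hR i), zero_sub, neg_zero]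
      -- transfer back through the Koszul sign
      rw [hsym, map_zsmul] at hmain
      have hss : ((s : ℤ)) * ((s : ℤ)) = 1 := by
        rcases Int.units_eq_one_or s with h | h <;> rw [h] <;> norm_num
      have : C (B.brace (m + 2) θ ψ) =
          (s : ℤ) • ((s : ℤ) • C (B.brace (m + 2) θ ψ)) := by
        rw [smul_smul, hss, one_smul]
      rw [this, hmain, smul_zero]
  -- Part 1: braces with `A ∘ C` in head position vanish
  have ACvanish : ∀ (m : ℕ) (dθ : ℤ) (dφ : Fin (m + 1) → ℤ) (θ : W)
      (φ : Fin (m + 1) → W), θ ∈ B.grading dθ → (∀ i, φ i ∈ B.grading (dφ i)) →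
      B.brace (m + 1) (A (C θ)) φ = 0 := by
    intro m
    induction m with
    | zero =>
      intro dθ dφ θ φ hθ hφ
      have hφe : φ = ![φ 0] := by
        funext i
        fin_cases i
        rfl
      rw [hφe]
      exact h1 dθ (dφ 0) θ (φ 0) hθ (hφ 0)
    | succ m IH =>
      intro dθ dφ θ φ hθ hφ
      set xs := fun i : Fin (m + 1) => φ i.castSucc with hxsdef
      set χ := φ (Fin.last (m + 1)) with hχdef
      have hsnoc : Fin.snoc xs χ = φ := snoc_self φ
      have hxs : ∀ i, xs i ∈ B.grading (dφ i.castSucc) := fun i => hφ i.castSucc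
      have hb1 := brace_one B (m + 1) (A (C θ)) χ xs (dφ (Fin.last (m + 1)))
        (hφ (Fin.last (m + 1)))
      have hxs0 : B.brace (m + 1) (A (C θ)) xs = 0 :=
        IH dθ (fun i => dφ i.castSucc) θ xs hθ hxs
      rw [hxs0, brace_zero_left] at hb1
      have hsum : ∀ i : Fin (m + 1),
          B.brace (m + 1) (A (C θ)) (Function.update xs i (B.brace 1 (xs i) ![χ])) = 0 := by
        intro i
        have hχi : B.brace 1 (xs i) ![χ] ∈
            B.grading (dφ i.castSucc + ∑ _a : Fin 1, dφ (Fin.last (m + 1))) :=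
          B.brace_degree 1 (dφ i.castSucc) (fun _ => dφ (Fin.last (m + 1))) (xs i) ![χ]
            (hxs i) (fun a => by rw [matrix_fin1]; exact hφ (Fin.last (m + 1)))
        exact IH dθ
          (Function.update (fun i' : Fin (m + 1) => dφ i'.castSucc) i
            (dφ i.castSucc + ∑ _a : Fin 1, dφ (Fin.last (m + 1))))
          θ _ hθ (updMem B xs _ i _ _ hxs hχi)
      rw [Finset.sum_eq_zero (fun i _ => hsum i), add_zero] at hb1
      rw [← hsnoc]
      exact hb1.symm
  -- now the main statement
  intro n hn dθ dφ θ φ hθ hφ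
  obtain ⟨m, rfl⟩ : ∃ m, n = m + 1 := ⟨n - 1, by omega⟩
  refine ⟨ACvanish m dθ dφ θ φ hθ hφ, ?_⟩
  -- Part 2 by replacing the slots one at a time
  have repl : ∀ t : ℕ, t ≤ m + 1 →
      C (B.brace (m + 1) θ (fun i => if (i : ℕ) < t then φ i else A (C (φ i)))) =
      C (B.brace (m + 1) θ (fun i => A (C (φ i)))) := by
    intro t
    induction t with
    | zero =>
      intro _
      congr 1
    | succ t IH =>
      intro ht
      have ht' : t ≤ m + 1 := Nat.le_of_succ_le ht
      have htm : t < m + 1 := ht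
      set ψt := fun i : Fin (m + 1) => if (i : ℕ) < t then φ i else A (C (φ i)) with hψt
      have hψthom : ∀ i, ψt i ∈ B.grading (dφ i) := by
        intro i
        by_cases h : (i : ℕ) < t <;> simp only [hψt, h, if_true, if_false]
        · exact hφ i
        · exact hACmem _ _ (hφ i)
      have e1 : (fun i : Fin (m + 1) => if (i : ℕ) < t + 1 then φ i else A (C (φ i))) =
          Function.update ψt ⟨t, htm⟩ (φ ⟨t, htm⟩) := by
        funext i
        rcases eq_or_ne i ⟨t, htm⟩ with rfl | hne
        · simp
        · have hvne : (i : ℕ) ≠ t := fun h => hne (Fin.ext h)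
          rw [Function.update_of_ne hne]
          simp only [hψt]
          rcases lt_or_ge (i : ℕ) t with h | h
          · rw [if_pos (by omega), if_pos h]
          · rw [if_neg (by omega), if_neg (by omega)]
      have e2 : ψt = Function.update ψt ⟨t, htm⟩ (A (C (φ ⟨t, htm⟩))) := by
        funext i
        rcases eq_or_ne i ⟨t, htm⟩ with rfl | hne
        · rw [Function.update_self, hψt]
          simp
        · rw [Function.update_of_ne hne]
      have hδsplit : φ ⟨t, htm⟩ + (A (C (φ ⟨t, htm⟩)) - φ ⟨t, htm⟩) =
          A (C (φ ⟨t, htm⟩)) := by abel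
      have hadd := B.brace_add_slot (m + 1) θ ψt ⟨t, htm⟩ (φ ⟨t, htm⟩)
        (A (C (φ ⟨t, htm⟩)) - φ ⟨t, htm⟩)
      rw [hδsplit] at hadd
      have hkill : C (B.brace (m + 1) θ
          (Function.update ψt ⟨t, htm⟩ (A (C (φ ⟨t, htm⟩)) - φ ⟨t, htm⟩))) = 0 := by
        refine slotKill m dθ (Function.update dφ ⟨t, htm⟩ (dφ ⟨t, htm⟩)) θ _ ⟨t, htm⟩ hθ
          (updMem B ψt dφ ⟨t, htm⟩ _ _ hψthom
            (sub_mem (hACmem _ _ (hφ _)) (hφ _))) ?_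
        rw [Function.update_self, map_sub, hCA, sub_self]
      calc C (B.brace (m + 1) θ
            (fun i => if (i : ℕ) < t + 1 then φ i else A (C (φ i))))
          = C (B.brace (m + 1) θ (Function.update ψt ⟨t, htm⟩ (φ ⟨t, htm⟩))) := by
            rw [e1]
        _ = C (B.brace (m + 1) θ ψt) := by
            conv_rhs => rw [e2]
            rw [hadd, map_add, hkill, add_zero]
        _ = C (B.brace (m + 1) θ (fun i => A (C (φ i)))) := IH ht'
  have := repl (m + 1) le_rfl
  have hfull : (fun i : Fin (m + 1) => if (i : ℕ) < m + 1 then φ i else A (C (φ i))) = φ := by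
    funext i
    rw [if_pos i.isLt]
  rw [hfull] at this
  exact this.symm
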